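/- Let G be a finite simple graph with vertices partitioned into H (good) and B (bad), satisfying assumptions A2 with parameter x and A3 with parameter y. Fix integers α ≥ y and β ≥ x. Define a one-step expansion relation: a finite set D of vertices expands to D ∪ Q if either (i) there exists l ∈ D and a set Q ⊆ F(l) \ D with every q ∈ Q having |F(l) ∩ F(q)| ≥ β, or (ii) there exists a connected set R ⊆ D with |R| ≥ α and a vertex m ∉ D adjacent to every vertex of R, and Q = {m}. Then any set reachable from {h}, for h ∈ H, by finitely many such expansions is contained in H. -/
import Mathlib


/-- One-step RCP backbone expansion with parameters `α` (sentinel size) and `β`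
(common-neighbor threshold). -/
def RCPStep {V : Type*} [Fintype V] [DecidableEq V] (G : SimpleGraph V) [DecidableRel G.Adj]
    (α β : ℕ) (D D' : Finset V) : Prop :=
  (∃ l ∈ D, ∃ Q : Finset V, Q.Nonempty ∧ Q ⊆ G.neighborFinset l \ D ∧
      (∀ q ∈ Q, β ≤ (G.neighborFinset l ∩ G.neighborFinset q).card) ∧ D' = D ∪ Q) ∨
  (∃ R : Finset V, R ⊆ D ∧ (G.induce (↑R : Set V)).Connected ∧ α ≤ R.card ∧
      ∃ m : V, m ∉ D ∧ (∀ v ∈ R, G.Adj v m) ∧ D' = insert m D)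

theorem stmt_4 {V : Type*} [Fintype V] [DecidableEq V] (G : SimpleGraph V) [DecidableRel G.Adj]
    (H B : Set V) (hdisj : Disjoint H B) (hcover : H ∪ B = Set.univ)
    (x y α β : ℕ) (hx : 0 < x) (hy : 0 < y) (hα : y ≤ α) (hβ : x ≤ β)
    (A2 : ∀ i j : V, i ∈ H → G.Adj i j →
      x ≤ (G.neighborFinset i ∩ G.neighborFinset j).card → j ∈ H)
    (A3 : ∀ (S : Finset V) (j : V), (↑S : Set V) ⊆ H → (G.induce (↑S : Set V)).Connected →
      y ≤ S.card → j ∉ S → (∀ s ∈ S, G.Adj j s) → j ∈ H)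
    (h : V) (hh : h ∈ H) (D : Finset V)
    (hD : Relation.ReflTransGen (RCPStep G α β) {h} D) :
    (↑D : Set V) ⊆ H := by
  induction hD with
  | refl =>
      intro v hv
      simp only [Finset.coe_singleton, Set.mem_singleton_iff] at hv
      exact hv ▸ hh
  | tail _ hstep ih =>
      rcases hstep with ⟨l, hl, Q, _, hQsub, hQβ, rfl⟩ | ⟨R, hR, hconn, hcard, m, hm, hadj, rfl⟩
      · intro v hv
        simp only [Finset.coe_union, Set.mem_union, Finset.mem_coe] at hv
        rcases hv with hv | hv
        · exact ih hv
        · have hq := hQsub hv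
          simp only [Finset.mem_sdiff, SimpleGraph.mem_neighborFinset] at hq
          exact A2 l v (ih hl) hq.1 (le_trans hβ (hQβ v hv))
      · intro v hv
        simp only [Finset.coe_insert, Set.mem_insert_iff, Finset.mem_coe] at hv
        rcases hv with rfl | hv
        · refine A3 R v (fun r hr => ih (hR hr)) hconn (le_trans hα hcard)
            (fun hvR => hm (hR hvR)) (fun s hs => (hadj s hs).symm)
        · exact ih hv
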